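/- arXiv:1801.05859 — 2 statements merged into one kernel-verified Lean document; each statement's English description precedes it below -/
import Mathlib

section
/- Kotel'nikov representation theorem (complex-baseband form). Let 0 ≤ f₁ < f₂ and let f : ℝ → ℝ be continuous and integrable, with integrable Fourier transform 𝓕f, and suppose that 𝓕f(ξ) = 0 whenever |ξ| < f₁ or |ξ| > f₂. Then there exists an integrable function G : ℝ → ℂ vanishing outside the interval [−(f₂−f₁)/2, (f₂−f₁)/2] such that, setting S := 𝓕⁻G (the inverse Fourier integral of G), one has f(t) = Re( S(t) · exp(2πi·((f₁+f₂)/2)·t) ) for every t ∈ ℝ. -/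
open MeasureTheory Real Complex
open scoped FourierTransform

/-!
Since `f` is real, its spectrum `F = 𝓕 f` is Hermitian, `F (-ξ) = conj (F ξ)`, so the inverse
transform of the negative-frequency half of `F` is the conjugate of that of the positive half
`P = 1_{ξ > 0} F`; Fourier inversion then gives `f = 2 Re 𝓕⁻ P`. Shifting `P` down by the centre
frequency `(f₁ + f₂) / 2` turns the band `[f₁, f₂]` into `[-(f₂ - f₁) / 2, (f₂ - f₁) / 2]` and
costs exactly the carrier factor, so `G ν = 2 P (ν + (f₁ + f₂) / 2)` works.
-/

namespace Real

open scoped RealInnerProductSpace ComplexConjugate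

variable {V E : Type*} [NormedAddCommGroup V] [InnerProductSpace ℝ V] [MeasurableSpace V]
  [BorelSpace V] [FiniteDimensional ℝ V] [NormedAddCommGroup E] [NormedSpace ℂ E]

theorem fourierInv_add {f g : V → E} (hf : Integrable f) (hg : Integrable g) (w : V) :
    𝓕⁻ (f + g) w = 𝓕⁻ f w + 𝓕⁻ g w := by
  simp only [fourierInv_eq_fourier_neg, fourier_eq, Pi.add_apply, smul_add]
  exact integral_add ((fourierIntegral_convergent_iff _).2 hf)
    ((fourierIntegral_convergent_iff _).2 hg)

theorem fourierInv_const_smul (r : ℂ) (f : V → E) : 𝓕⁻ (r • f) = r • 𝓕⁻ f :=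
  VectorFourier.fourierIntegral_const_smul _ _ _ f r

theorem fourierInv_comp_add_right (f : V → E) (a w : V) :
    𝓕⁻ (fun v ↦ f (v + a)) w = 𝐞 (-⟪a, w⟫) • 𝓕⁻ f w :=
  congrFun (VectorFourier.fourierIntegral_comp_add_right _ _ _ f a) w

theorem fourierInv_eq_fourierChar_mul_fourierInv_comp_add_right (f : ℝ → ℂ) (a t : ℝ) :
    𝓕⁻ f t = 𝐞 (a * t) * 𝓕⁻ (fun ξ ↦ f (ξ + a)) t := by
  rw [fourierInv_comp_add_right, Circle.smul_def, smul_eq_mul, ← mul_assoc, ← Circle.coe_mul,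
    ← AddChar.map_add_eq_mul, inner_apply, add_neg_cancel, AddChar.map_zero_eq_one,
    Circle.coe_one, one_mul]

theorem conj_fourierChar (x : ℝ) : conj (𝐞 x : ℂ) = 𝐞 (-x) := by
  rw [← Circle.coe_inv_eq_conj, AddChar.map_neg_eq_inv]

theorem fourier_ofReal_neg (f : V → ℝ) (w : V) :
    𝓕 (fun v ↦ (f v : ℂ)) (-w) = conj (𝓕 (fun v ↦ (f v : ℂ)) w) := by
  simp only [fourier_eq, ← integral_conj, Circle.smul_def, smul_eq_mul, map_mul, conj_ofReal,
    conj_fourierChar, inner_neg_right]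

theorem fourierInv_conj_comp_neg (f : V → ℂ) (w : V) :
    𝓕⁻ (fun v ↦ conj (f (-v))) w = conj (𝓕⁻ f w) := by
  rw [fourierInv_eq, fourierInv_eq, ← integral_conj,
    ← integral_neg_eq_self (fun v ↦ conj (𝐞 ⟪v, w⟫ • f v))]
  simp only [Circle.smul_def, smul_eq_mul, map_mul, conj_fourierChar, inner_neg_left, neg_neg]

theorem fourierInv_eq_two_mul_re_fourierInv_indicator_Ioi {F : ℝ → ℂ} (hF : Integrable F)
    (hF_conj : ∀ ξ, F (-ξ) = conj (F ξ)) (t : ℝ) :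
    𝓕⁻ F t = ((2 * (𝓕⁻ ((Set.Ioi 0).indicator F) t).re : ℝ) : ℂ) := by
  set P := (Set.Ioi (0 : ℝ)).indicator F
  have hP : Integrable P := hF.indicator measurableSet_Ioi
  have hP_conj : Integrable fun ξ ↦ conj (P (-ξ)) :=
    conjCLE.integrable_comp_iff.2 (Integrable.comp_neg hP)
  have hsplit : F =ᵐ[volume] P + fun ξ ↦ conj (P (-ξ)) := by
    filter_upwards [volume.ae_ne (0 : ℝ)] with ξ hξ
    rcases hξ.lt_or_gt with hneg | hpos
    · have hnpos : 0 < -ξ := neg_pos.2 hneg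
      simp [P, hneg.not_gt, hnpos, hF_conj]
    · simp [P, hpos, hpos.le]
  rw [fourierInv_congr_ae hsplit, fourierInv_add hP hP_conj, fourierInv_conj_comp_neg, add_conj]

end Real

theorem kotelnikov_complex_baseband_general
    (f₁ f₂ : ℝ)
    (f : ℝ → ℝ) (hcont : Continuous f)
    (hint : Integrable f)
    (hFint : Integrable (𝓕 (fun t : ℝ => (f t : ℂ))))
    (hband : ∀ ξ : ℝ, (|ξ| < f₁ ∨ |ξ| > f₂) → 𝓕 (fun t : ℝ => (f t : ℂ)) ξ = 0) :
    ∃ G : ℝ → ℂ, Integrable G ∧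
      (∀ ξ : ℝ, ξ ∉ Set.Icc (-((f₂ - f₁) / 2)) ((f₂ - f₁) / 2) → G ξ = 0) ∧
      (∀ t : ℝ,
        f t = ((𝓕⁻ G) t *
          Complex.exp (2 * Real.pi * Complex.I * (((f₁ + f₂) / 2 : ℝ) : ℂ) * (t : ℂ))).re) := by
  set F := 𝓕 fun t ↦ (f t : ℂ)
  set P := (Set.Ioi 0).indicator F
  set fc := (f₁ + f₂) / 2 with hfc
  refine ⟨(2 : ℂ) • fun ν ↦ P (ν + fc),
    ((hFint.indicator measurableSet_Ioi).comp_add_right fc).smul 2, fun ν hν ↦ ?_, fun t ↦ ?_⟩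
  · refine mul_eq_zero_of_right _ (Set.indicator_apply_eq_zero.2 fun hpos ↦ hband _ ?_)
    rw [abs_of_pos hpos]
    rw [Set.mem_Icc, not_and_or, not_le, not_le] at hν
    rcases hν with h | h
    exacts [Or.inl (by linarith), Or.inr (by linarith)]
  · have hre : f t = 2 * (𝓕⁻ P t).re := by
      have hinv : 𝓕⁻ F t = f t :=
        congrFun ((continuous_ofReal.comp hcont).fourierInv_fourier_eq hint.ofReal hFint) t
      exact_mod_cast hinv.symm.trans
        (fourierInv_eq_two_mul_re_fourierInv_indicator_Ioi hFint (fourier_ofReal_neg f) t)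
    have hcarrier : Complex.exp (2 * π * I * (fc : ℂ) * t) = 𝐞 (fc * t) := by
      rw [fourierChar_apply]; push_cast; ring_nf
    rw [fourierInv_const_smul, Pi.smul_apply, hcarrier, smul_eq_mul, hre,
      fourierInv_eq_fourierChar_mul_fourierInv_comp_add_right P fc t]
    simp only [mul_re, mul_im, re_ofNat, im_ofNat]
    ring

/-- **Kotel'nikov representation theorem (complex-baseband form).**
If a real signal `f` is continuous, integrable, has integrable Fourier transform, and its
Fourier transform vanishes outside the band `f₁ ≤ |ξ| ≤ f₂`, then `f` is the real part of a
complex baseband signal (the inverse Fourier integral of an integrable `G` supported in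
`[-(f₂-f₁)/2, (f₂-f₁)/2]`) modulated by the carrier frequency `(f₁+f₂)/2`. -/
theorem kotelnikov_complex_baseband
    (f₁ f₂ : ℝ) (hf₁ : 0 ≤ f₁) (h₁₂ : f₁ < f₂)
    (f : ℝ → ℝ) (hcont : Continuous f)
    (hint : Integrable f)
    (hFint : Integrable (𝓕 (fun t : ℝ => (f t : ℂ))))
    (hband : ∀ ξ : ℝ, (|ξ| < f₁ ∨ |ξ| > f₂) → 𝓕 (fun t : ℝ => (f t : ℂ)) ξ = 0) :
    ∃ G : ℝ → ℂ, Integrable G ∧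
      (∀ ξ : ℝ, ξ ∉ Set.Icc (-((f₂ - f₁) / 2)) ((f₂ - f₁) / 2) → G ξ = 0) ∧
      (∀ t : ℝ,
        f t = ((𝓕⁻ G) t *
          Complex.exp (2 * Real.pi * Complex.I * (((f₁ + f₂) / 2 : ℝ) : ℂ) * (t : ℂ))).re) :=
  kotelnikov_complex_baseband_general f₁ f₂ f hcont hint hFint hband
end

section
/- The demodulated Meyer spectrum reproduces the Meyer scaling-function spectrum (Fig. 4). Let ν and M be as follows: ν(x) = 0 for x ≤ 0, ν(x) = x for 0 ≤ x ≤ 1, ν(x) = 1 for x ≥ 1; M(w) = (1/√(2π))·sin( (π/2)·ν(3|w|/(2π) − 1) ) for 2π/3 ≤ |w| ≤ 4π/3, M(w) = (1/√(2π))·cos( (π/2)·ν(3|w|/(4π) − 1) ) for 4π/3 ≤ |w| ≤ 8π/3, M(w) = 0 otherwise. Let Φ : ℝ → ℝ be the magnitude of the Meyer scaling-function spectrum: Φ(w) = 1/√(2π) for |w| ≤ 2π/3, Φ(w) = (1/√(2π))·cos( (π/2)·ν(3|w|/(2π) − 1) ) for 2π/3 ≤ |w| ≤ 4π/3, and Φ(w)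 = 0 otherwise. Then for every w with |w| ≤ 8π/3, one has M(w − 2π)² + M(w + 2π)² = Φ(w)²: shifting the two Meyer spectral lobes to baseband by the carrier frequency 2π rad/s and combining them in quadrature yields exactly the Meyer scaling-function spectrum. -/
/-! Both sides are even in `w`, so take `w ≥ 0`. Because `ν` clamps, each spectrum is a single
closed formula on a half-line: with `c = 1/√(2π)`, `Φ(w) = c·cos(π/2·ν(3|w|/2π − 1))` for all
`w`, while `M(w) = c·sin(π/2·ν(3|w|/2π − 1))` for `|w| ≤ 4π/3` and
`M(w) = c·cos(π/2·ν(3|w|/4π − 1))` for `|w| ≥ 4π/3`.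
The symmetry `ν(1 − x) = 1 − ν(x)` turns the sine of one lobe into the cosine of the other:
for `w ≤ 2π/3` the two shifted lobes are `c·sin θ` and `c·cos θ`, summing to `c² = Φ(w)²`; for
`w ≥ 2π/3` the upper lobe vanishes and the lower one is exactly `Φ(w)`. -/

open Real

/-- The standard Meyer ramp: `ν(x) = 0` for `x ≤ 0`, `ν(x) = x` for `0 ≤ x ≤ 1`,
`ν(x) = 1` for `x ≥ 1`. -/
noncomputable def meyerNu (x : ℝ) : ℝ :=
  if x ≤ 0 then 0 else if x ≤ 1 then x else 1

/-- The magnitude `M` of the Meyer wavelet spectrum (in angular frequency `w`, rad/s):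
`M(w) = (1/√(2π))·sin((π/2)·ν(3|w|/(2π) − 1))` for `2π/3 ≤ |w| ≤ 4π/3`,
`M(w) = (1/√(2π))·cos((π/2)·ν(3|w|/(4π) − 1))` for `4π/3 ≤ |w| ≤ 8π/3`,
and `M(w) = 0` otherwise (the two branches agree at `|w| = 4π/3`). -/
noncomputable def meyerMag (w : ℝ) : ℝ :=
  if 2 * π / 3 ≤ |w| ∧ |w| ≤ 4 * π / 3 then
    (1 / Real.sqrt (2 * π)) * Real.sin (π / 2 * meyerNu (3 * |w| / (2 * π) - 1))
  else if 4 * π / 3 ≤ |w| ∧ |w| ≤ 8 * π / 3 then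
    (1 / Real.sqrt (2 * π)) * Real.cos (π / 2 * meyerNu (3 * |w| / (4 * π) - 1))
  else 0

/-- The magnitude `Φ` of the Meyer scaling-function spectrum:
`Φ(w) = 1/√(2π)` for `|w| ≤ 2π/3`,
`Φ(w) = (1/√(2π))·cos((π/2)·ν(3|w|/(2π) − 1))` for `2π/3 ≤ |w| ≤ 4π/3`,
and `Φ(w) = 0` otherwise. -/
noncomputable def meyerScalingMag (w : ℝ) : ℝ :=
  if |w| ≤ 2 * π / 3 then 1 / Real.sqrt (2 * π)
  else if |w| ≤ 4 * π / 3 then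
    (1 / Real.sqrt (2 * π)) * Real.cos (π / 2 * meyerNu (3 * |w| / (2 * π) - 1))
  else 0

lemma meyerNu_of_nonpos {x : ℝ} (hx : x ≤ 0) : meyerNu x = 0 := if_pos hx

lemma meyerNu_of_one_le {x : ℝ} (hx : 1 ≤ x) : meyerNu x = 1 := by
  unfold meyerNu; split_ifs <;> linarith

lemma meyerNu_one_sub (x : ℝ) : meyerNu (1 - x) = 1 - meyerNu x := by
  unfold meyerNu; split_ifs <;> linarith

lemma cos_meyerNu_one_sub (x : ℝ) :
    cos (π / 2 * meyerNu (1 - x)) = sin (π / 2 * meyerNu x) := by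
  rw [meyerNu_one_sub, mul_one_sub, cos_pi_div_two_sub]

lemma sin_meyerNu_one_sub (x : ℝ) :
    sin (π / 2 * meyerNu (1 - x)) = cos (π / 2 * meyerNu x) := by
  rw [meyerNu_one_sub, mul_one_sub, sin_pi_div_two_sub]

lemma meyerMag_neg (x : ℝ) : meyerMag (-x) = meyerMag x := by
  simp only [meyerMag, abs_neg]

lemma meyerScalingMag_neg (x : ℝ) : meyerScalingMag (-x) = meyerScalingMag x := by
  simp only [meyerScalingMag, abs_neg]

lemma meyerScalingMag_eq (x : ℝ) :
    meyerScalingMag x = 1 / Real.sqrt (2 * π) * cos (π / 2 * meyerNu (3 * |x| / (2 * π) - 1)) := by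
  have hπ := pi_pos
  unfold meyerScalingMag
  split_ifs with h₁ h₂
  · rw [meyerNu_of_nonpos, mul_zero, cos_zero, mul_one]
    field_simp; linarith
  · rfl
  · rw [meyerNu_of_one_le, mul_one, cos_pi_div_two, mul_zero]
    field_simp; linarith

lemma meyerMag_of_abs_le {x : ℝ} (hx : |x| ≤ 4 * π / 3) :
    meyerMag x = 1 / Real.sqrt (2 * π) * sin (π / 2 * meyerNu (3 * |x| / (2 * π) - 1)) := by
  have hπ := pi_pos
  unfold meyerMag
  split_ifs with h₁ h₂
  · rfl
  · exact absurd ⟨by linarith, hx⟩ h₁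
  · have hsmall : |x| < 2 * π / 3 := by
      by_contra! h
      exact h₁ ⟨h, hx⟩
    rw [meyerNu_of_nonpos, mul_zero, sin_zero, mul_zero]
    field_simp; linarith

lemma meyerMag_of_le_abs {x : ℝ} (hx : 4 * π / 3 ≤ |x|) :
    meyerMag x = 1 / Real.sqrt (2 * π) * cos (π / 2 * meyerNu (3 * |x| / (4 * π) - 1)) := by
  have hπ := pi_pos
  unfold meyerMag
  split_ifs with h₁ h₂
  · have hx' : |x| = 4 * π / 3 := le_antisymm h₁.2 hx
    have hsin : 3 * (4 * π / 3) / (2 * π) - 1 = 1 := by field_simp; ring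
    have hcos : 3 * (4 * π / 3) / (4 * π) - 1 = 0 := by field_simp; ring
    rw [hx', hsin, hcos, meyerNu_of_one_le le_rfl, meyerNu_of_nonpos le_rfl]
    simp
  · rfl
  · have hlarge : 8 * π / 3 < |x| := by
      by_contra! h
      exact h₂ ⟨hx, h⟩
    rw [meyerNu_of_one_le, mul_one, cos_pi_div_two, mul_zero]
    field_simp; linarith

lemma meyerMag_add_two_pi {w : ℝ} (hw : 0 ≤ w) :
    meyerMag (w + 2 * π) =
      1 / Real.sqrt (2 * π) * cos (π / 2 * meyerNu (3 * w / (4 * π) + 1 / 2)) := by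
  have hπ := pi_pos
  have habs : |w + 2 * π| = w + 2 * π := abs_of_nonneg (by positivity)
  rw [meyerMag_of_le_abs (by rw [habs]; linarith), habs]
  congr 4
  field_simp
  ring

lemma meyer_demodulation_of_nonneg {w : ℝ} (hw₀ : 0 ≤ w) (hw : w ≤ 8 * π / 3) :
    meyerMag (w - 2 * π) ^ 2 + meyerMag (w + 2 * π) ^ 2 = meyerScalingMag w ^ 2 := by
  have hπ := pi_pos
  rw [meyerMag_add_two_pi hw₀, meyerScalingMag_eq, abs_of_nonneg hw₀]
  rcases le_total w (2 * π / 3) with hw_low | hw_mid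
  · have habs : |w - 2 * π| = 2 * π - w := by rw [abs_sub_comm, abs_of_nonneg (by linarith)]
    have harg : 3 * (2 * π - w) / (4 * π) - 1 = 1 - (3 * w / (4 * π) + 1 / 2) := by
      field_simp; ring
    rw [meyerMag_of_le_abs (by rw [habs]; linarith), habs, harg, cos_meyerNu_one_sub,
      meyerNu_of_nonpos (x := 3 * w / (2 * π) - 1) (by field_simp; linarith), mul_zero, cos_zero]
    linear_combination (1 / Real.sqrt (2 * π)) ^ 2 *
      sin_sq_add_cos_sq (π / 2 * meyerNu (3 * w / (4 * π) + 1 / 2))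
  · rw [meyerNu_of_one_le (x := 3 * w / (4 * π) + 1 / 2) (by field_simp; linarith), mul_one,
      cos_pi_div_two]
    rcases le_total w (2 * π) with hw_mid' | hw_high
    · have habs : |w - 2 * π| = 2 * π - w := by rw [abs_sub_comm, abs_of_nonneg (by linarith)]
      have harg : 3 * (2 * π - w) / (2 * π) - 1 = 1 - (3 * w / (2 * π) - 1) := by
        field_simp; ring
      rw [meyerMag_of_abs_le (by rw [habs]; linarith), habs, harg, sin_meyerNu_one_sub]
      ring
    · have habs : |w - 2 * π| = w - 2 * π := abs_of_nonneg (by linarith)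
      rw [meyerMag_of_abs_le (by rw [habs]; linarith), habs,
        meyerNu_of_nonpos (x := 3 * (w - 2 * π) / (2 * π) - 1) (by field_simp; linarith),
        meyerNu_of_one_le (x := 3 * w / (2 * π) - 1) (by field_simp; linarith)]
      simp

/-- **The demodulated Meyer spectrum reproduces the Meyer scaling-function spectrum** (Fig. 4).
Shifting the two Meyer spectral lobes to baseband by the carrier `2π` rad/s and combining
them in quadrature yields exactly the Meyer scaling-function spectrum:
`M(w − 2π)² + M(w + 2π)² = Φ(w)²` for all `|w| ≤ 8π/3`. -/
theorem meyer_demodulation_scaling_spectrum :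
    ∀ w : ℝ, |w| ≤ 8 * π / 3 →
      meyerMag (w - 2 * π) ^ 2 + meyerMag (w + 2 * π) ^ 2 = meyerScalingMag w ^ 2 := by
  intro w hw
  rcases le_total 0 w with hw₀ | hw₀
  · exact meyer_demodulation_of_nonneg hw₀ (by rwa [abs_of_nonneg hw₀] at hw)
  · have h := meyer_demodulation_of_nonneg (neg_nonneg.2 hw₀) (by rwa [abs_of_nonpos hw₀] at hw)
    rwa [show -w - 2 * π = -(w + 2 * π) by ring, show -w + 2 * π = -(w - 2 * π) by ring,
      meyerMag_neg, meyerMag_neg, meyerScalingMag_neg, add_comm] at h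
end
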